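/- arXiv:1604.07375 — 8 statements merged into one kernel-verified Lean document; each statement's English description precedes it below -/
import Mathlib

section
/- If φ: G → H is a coarse embedding, then there exists a subset X ⊆ G such that φ restricted to X is a bijection onto φ(G), and there is a finite subset F ⊆ G with G = ⋃_{g ∈ F} gX. -/
def CoarseEmbedding {G H : Type*} [Group G] [Group H] (φ : G → H) : Prop :=
  ∀ S : Set (G × G), ((fun p : G × G => p.1 * p.2⁻¹) '' S).Finite ↔
    ((fun p : G × G => φ p.1 * (φ p.2)⁻¹) '' S).Finite

theorem coarseEmbedding_section {G H : Type*} [Group G] [Group H]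
    (φ : G → H) (hφ : CoarseEmbedding φ) :
    ∃ X : Set G, Set.InjOn φ X ∧ φ '' X = Set.range φ ∧
      ∃ F : Finset G, ∀ x : G, ∃ g ∈ F, ∃ x' ∈ X, x = g * x' := by
  classical
  set ψ : H → G := fun h => if h' : ∃ g, φ g = h then Classical.choose h' else 1 with hψ
  have hψφ : ∀ x : G, φ (ψ (φ x)) = φ x := by
    intro x
    have h' : ∃ g, φ g = φ x := ⟨x, rfl⟩
    simp only [hψ, dif_pos h']
    exact Classical.choose_spec h'
  set X : Set G := ψ '' Set.range φ with hX
  have hS : ((fun p : G × G => φ p.1 * (φ p.2)⁻¹) '' {p : G × G | p.2 = ψ (φ p.1)}).Finite := by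
    apply Set.Finite.subset (Set.finite_singleton (1 : H))
    rintro _ ⟨⟨a, b⟩, hb, rfl⟩
    simp only [Set.mem_setOf_eq] at hb
    simp [hb, hψφ a]
  have hfin := (hφ _).mpr hS
  refine ⟨X, ?_, ?_, hfin.toFinset, ?_⟩
  · rintro _ ⟨h1, ⟨x1, rfl⟩, rfl⟩ _ ⟨h2, ⟨x2, rfl⟩, rfl⟩ heq
    rw [hψφ x1, hψφ x2] at heq
    rw [heq]
  · ext h
    constructor
    · rintro ⟨_, ⟨_, ⟨x, rfl⟩, rfl⟩, rfl⟩
      exact ⟨_, rfl⟩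
    · rintro ⟨x, rfl⟩
      exact ⟨ψ (φ x), ⟨_, ⟨x, rfl⟩, rfl⟩, hψφ x⟩
  · intro x
    refine ⟨x * (ψ (φ x))⁻¹, ?_, ψ (φ x), ⟨_, ⟨x, rfl⟩, rfl⟩, by group⟩
    simp only [Set.Finite.mem_toFinset]
    exact ⟨(x, ψ (φ x)), rfl, rfl⟩
end

section
/- Let φ: G → H be a coarse map, R a commutative ring with unit, W an R-module, and L ⊆ C(G,W) a res-invariant RG-submodule. Then the pushforward module φ_*L equals the R-span of {h.φ_*(f) : h ∈ H, f ∈ L}, where φ_*(f)(y) = Σ_{x : φ(x)=y} f(x). -/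
def CoarseMap {G H : Type*} [Group G] [Group H] (φ : G → H) : Prop :=
  (∀ y : H, (φ ⁻¹' {y}).Finite) ∧
  ∀ S : Set (G × G), ((fun p : G × G => p.1 * p.2⁻¹) '' S).Finite →
    ((fun p : G × G => φ p.1 * (φ p.2)⁻¹) '' S).Finite

def IsResInvariant {G : Type*} [Group G] (R : Type*) [CommRing R]
    {W : Type*} [AddCommGroup W] [Module R W] (L : Submodule R (G → W)) : Prop :=
  (∀ g : G, ∀ f ∈ L, (fun x => f (g⁻¹ * x)) ∈ L) ∧
  (∀ f ∈ L, ∀ A : Set G, A.indicator f ∈ L)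

/-- The pushforward of a function: `pushFn φ f y = ∑_{φ x = y} f x`. -/
noncomputable def pushFn {G H : Type*} {W : Type*} [AddCommMonoid W]
    (φ : G → H) (f : G → W) : H → W :=
  fun y => ∑ᶠ x ∈ {x : G | φ x = y}, f x

/-- `pushMod R φ L` is the smallest res-invariant `RH`-submodule of `C(H,W)` containing
all `pushFn φ f`, `f ∈ L`. -/
noncomputable def pushMod {G H : Type*} [Group G] [Group H] (R : Type*) [CommRing R]
    {W : Type*} [AddCommGroup W] [Module R W]
    (φ : G → H) (L : Submodule R (G → W)) : Submodule R (H → W) :=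
  sInf {M : Submodule R (H → W) | IsResInvariant R M ∧ ∀ f ∈ L, pushFn φ f ∈ M}

/-- Translation by `g` as a linear map on functions. -/
def transLM {H : Type*} [Group H] (R : Type*) [CommRing R]
    {W : Type*} [AddCommGroup W] [Module R W] (g : H) : (H → W) →ₗ[R] (H → W) where
  toFun F := fun x => F (g⁻¹ * x)
  map_add' _ _ := rfl
  map_smul' _ _ := rfl

/-- Indicator of a set as a linear map on functions. -/
noncomputable def indLM {H : Type*} (R : Type*) [CommRing R]
    {W : Type*} [AddCommGroup W] [Module R W] (A : Set H) : (H → W) →ₗ[R] (H → W) where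
  toFun F := A.indicator F
  map_add' F G := by
    funext x
    by_cases h : x ∈ A <;> simp [Set.indicator_apply, h]
  map_smul' c F := by
    funext x
    by_cases h : x ∈ A <;> simp [Set.indicator_apply, h]

theorem pushMod_eq_span {G H : Type*} [Group G] [Group H] (R : Type*) [CommRing R]
    {W : Type*} [AddCommGroup W] [Module R W]
    (φ : G → H) (hφ : CoarseMap φ) (L : Submodule R (G → W)) (hL : IsResInvariant R L) :
    pushMod R φ L =
      Submodule.span R {F : H → W | ∃ h : H, ∃ f ∈ L, F = fun y => pushFn φ f (h⁻¹ * y)} := by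
  set S : Set (H → W) := {F : H → W | ∃ h : H, ∃ f ∈ L, F = fun y => pushFn φ f (h⁻¹ * y)}
    with hSdef
  apply le_antisymm
  · -- sInf ≤ span : show the span belongs to the family
    apply sInf_le
    refine ⟨⟨?_, ?_⟩, ?_⟩
    · -- translation invariance of the span
      intro g F hF
      have himg : (transLM R g) '' S ⊆ S := by
        rintro _ ⟨F, ⟨h, f, hf, rfl⟩, rfl⟩
        refine ⟨g * h, f, hf, ?_⟩
        funext y
        simp [transLM, mul_inv_rev, mul_assoc]
      have : (transLM R g) F ∈ Submodule.span R S := by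
        have := Submodule.mem_map_of_mem (f := transLM R g) hF
        rw [Submodule.map_span] at this
        exact Submodule.span_mono himg this
      exact this
    · -- restriction invariance of the span
      intro F hF A
      have himg : (indLM R A) '' S ⊆ S := by
        rintro _ ⟨F, ⟨h, f, hf, rfl⟩, rfl⟩
        refine ⟨h, (φ ⁻¹' ((fun z => h * z) ⁻¹' A)).indicator f, hL.2 f hf _, ?_⟩
        funext y
        show A.indicator (fun y => pushFn φ f (h⁻¹ * y)) y = _
        by_cases hy : y ∈ A
        · rw [Set.indicator_of_mem hy]
          unfold pushFn
          apply finsum_mem_congr rfl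
          intro x hx
          rw [Set.indicator_of_mem]
          show φ x ∈ (fun z => h * z) ⁻¹' A
          simp only [Set.mem_setOf_eq] at hx
          simp [hx, hy]
        · rw [Set.indicator_of_notMem hy]
          unfold pushFn
          symm
          have hz : ∀ x ∈ {x : G | φ x = h⁻¹ * y},
              (φ ⁻¹' ((fun z => h * z) ⁻¹' A)).indicator f x = 0 := by
            intro x hx
            apply Set.indicator_of_notMem
            intro hmem
            simp only [Set.mem_setOf_eq] at hx
            simp only [Set.mem_preimage, hx] at hmem
            rw [mul_inv_cancel_left] at hmem
            exact hy hmem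
          rw [finsum_mem_congr rfl hz]
          simp
      have : (indLM R A) F ∈ Submodule.span R S := by
        have := Submodule.mem_map_of_mem (f := indLM R A) hF
        rw [Submodule.map_span] at this
        exact Submodule.span_mono himg this
      exact this
    · -- contains pushFn φ f
      intro f hf
      apply Submodule.subset_span
      exact ⟨1, f, hf, by funext y; simp⟩
  · -- span ≤ sInf
    refine le_sInf ?_
    rintro M ⟨hMinv, hMpush⟩
    rw [Submodule.span_le]
    rintro F ⟨h, f, hf, rfl⟩
    exact hMinv.1 h _ (hMpush f hf)
end

section
/- If φ, ψ: G → H are coarse maps that are close, then φ_*L = ψ_*L for every res-invariant RG-submodule L of C(G,W), and φ*M = ψ*M for every res-invariant RH-submodule M of C(H,W). -/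
def Close {G H : Type*} [Group G] [Group H] (φ ψ : G → H) : Prop :=
  (Set.range fun x => φ x * (ψ x)⁻¹).Finite

def pullMod {G H : Type*} [Group G] [Group H] (R : Type*) [CommRing R]
    {W : Type*} [AddCommGroup W] [Module R W]
    (φ : G → H) (M : Submodule R (H → W)) : Submodule R (G → W) :=
  sInf {L : Submodule R (G → W) | IsResInvariant R L ∧ ∀ f ∈ M, f ∘ φ ∈ L}

set_option linter.unusedSectionVars false

section Aux

variable {G H : Type*} [Group G] [Group H] (R : Type*) [CommRing R]
    {W : Type*} [AddCommGroup W] [Module R W]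

lemma close_symm' {φ ψ : G → H}
    (h : (Set.range fun x => φ x * (ψ x)⁻¹).Finite) :
    (Set.range fun x => ψ x * (φ x)⁻¹).Finite := by
  have : (Set.range fun x => ψ x * (φ x)⁻¹) ⊆
      (fun c : H => c⁻¹) '' (Set.range fun x => φ x * (ψ x)⁻¹) := by
    rintro y ⟨x, rfl⟩
    exact ⟨φ x * (ψ x)⁻¹, ⟨x, rfl⟩, by group⟩
  exact (h.image _).subset this

/-- Decomposition of a function along the finitely many "difference" values. -/
lemma sum_indicator_eq {φ ψ : G → H}
    (h : (Set.range fun x => φ x * (ψ x)⁻¹).Finite) (f : G → W) :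
    ∀ x : G, (∑ c ∈ h.toFinset, ({x : G | φ x * (ψ x)⁻¹ = c}).indicator f x) = f x := by
  intro x
  rw [Finset.sum_eq_single_of_mem (φ x * (ψ x)⁻¹)
    (h.mem_toFinset.mpr ⟨x, rfl⟩)]
  · exact Set.indicator_of_mem (show x ∈ {x' : G | φ x' * (ψ x')⁻¹ = φ x * (ψ x)⁻¹} from rfl) f
  · intro c _ hc
    exact Set.indicator_of_notMem (fun hx => absurd (Set.mem_setOf_eq ▸ hx).symm hc) f

lemma push_aux {φ ψ : G → H} (hφ1 : ∀ y : H, (φ ⁻¹' {y}).Finite)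
    (hclose : (Set.range fun x => φ x * (ψ x)⁻¹).Finite)
    {L : Submodule R (G → W)} (hL : IsResInvariant R L)
    {M : Submodule R (H → W)} (hM : IsResInvariant R M)
    (hMψ : ∀ f ∈ L, pushFn ψ f ∈ M) :
    ∀ f ∈ L, pushFn φ f ∈ M := by
  intro f hf
  set F := hclose.toFinset with hF
  set A : H → Set G := fun c => {x : G | φ x * (ψ x)⁻¹ = c} with hA
  -- pushFn φ of an indicator piece is a translate of pushFn ψ of it
  have key : ∀ c : H, pushFn φ ((A c).indicator f)
      = fun y => pushFn ψ ((A c).indicator f) (c⁻¹ * y) := by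
    intro c
    funext y
    show (∑ᶠ x ∈ {x : G | φ x = y}, (A c).indicator f x)
        = ∑ᶠ x ∈ {x : G | ψ x = c⁻¹ * y}, (A c).indicator f x
    rw [finsum_mem_def, finsum_mem_def]
    congr 1
    funext x
    rw [Set.indicator_indicator, Set.indicator_indicator]
    congr 1
    ext z
    simp only [Set.mem_inter_iff, Set.mem_setOf_eq, hA]
    constructor
    · rintro ⟨h1, h2⟩
      refine ⟨?_, h2⟩
      rw [mul_inv_eq_iff_eq_mul] at h2
      rw [h2] at h1
      rw [eq_inv_mul_iff_mul_eq, ← h1]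
    · rintro ⟨h1, h2⟩
      refine ⟨?_, h2⟩
      rw [mul_inv_eq_iff_eq_mul] at h2
      rw [eq_inv_mul_iff_mul_eq] at h1
      rw [h2, h1]
  -- pushFn φ f decomposes as a finite sum
  have decomp : pushFn φ f = ∑ c ∈ F, pushFn φ ((A c).indicator f) := by
    funext y
    have hfin : ∀ g : G → W, pushFn φ g y = ∑ x ∈ (hφ1 y).toFinset, g x := by
      intro g
      show (∑ᶠ x ∈ {x : G | φ x = y}, g x) = _
      have hset : {x : G | φ x = y} = ((hφ1 y).toFinset : Set G) := by
        ext x; simp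
      rw [hset, finsum_mem_coe_finset]
    rw [Finset.sum_apply, hfin]
    calc (∑ x ∈ (hφ1 y).toFinset, f x)
        = ∑ x ∈ (hφ1 y).toFinset, ∑ c ∈ F, (A c).indicator f x := by
          refine Finset.sum_congr rfl fun x _ => ?_
          exact (sum_indicator_eq hclose f x).symm
      _ = ∑ c ∈ F, ∑ x ∈ (hφ1 y).toFinset, (A c).indicator f x := Finset.sum_comm
      _ = ∑ c ∈ F, pushFn φ ((A c).indicator f) y := by
          refine Finset.sum_congr rfl fun c _ => (hfin _).symm
  rw [decomp]
  refine Submodule.sum_mem M fun c _ => ?_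
  rw [key c]
  exact hM.1 c _ (hMψ _ (hL.2 f hf (A c)))

lemma pull_aux {φ ψ : G → H}
    (hclose : (Set.range fun x => φ x * (ψ x)⁻¹).Finite)
    {M : Submodule R (H → W)} (hM : IsResInvariant R M)
    {L : Submodule R (G → W)} (hL : IsResInvariant R L)
    (hLψ : ∀ f ∈ M, f ∘ ψ ∈ L) :
    ∀ f ∈ M, f ∘ φ ∈ L := by
  intro f hf
  set F := hclose.toFinset with hF
  set A : H → Set G := fun c => {x : G | φ x * (ψ x)⁻¹ = c} with hA
  have decomp : f ∘ φ = ∑ c ∈ F, (A c).indicator (fun x => f (c * ψ x)) := by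
    funext x
    rw [Finset.sum_apply]
    rw [Finset.sum_eq_single_of_mem (φ x * (ψ x)⁻¹)
      (hclose.mem_toFinset.mpr ⟨x, rfl⟩)]
    · rw [Set.indicator_of_mem (show x ∈ A (φ x * (ψ x)⁻¹) from rfl)]
      simp [mul_assoc]
    · intro c _ hc
      exact Set.indicator_of_notMem (fun hx => absurd (Set.mem_setOf_eq ▸ hx).symm hc) _
  rw [decomp]
  refine Submodule.sum_mem L fun c _ => ?_
  refine hL.2 _ ?_ (A c)
  have h1 : (fun y => f (c * y)) ∈ M := by
    have := hM.1 c⁻¹ f hf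
    simpa using this
  exact hLψ _ h1

end Aux


theorem close_pushMod_pullMod_eq {G H : Type*} [Group G] [Group H] (R : Type*) [CommRing R]
    {W : Type*} [AddCommGroup W] [Module R W]
    (φ ψ : G → H) (hφ : CoarseMap φ) (hψ : CoarseMap ψ) (hclose : Close φ ψ) :
    (∀ L : Submodule R (G → W), IsResInvariant R L → pushMod R φ L = pushMod R ψ L) ∧
    (∀ M : Submodule R (H → W), IsResInvariant R M → pullMod R φ M = pullMod R ψ M) := by
  have hclose' := close_symm' hclose
  constructor
  · intro L hL
    refine le_antisymm (sInf_le_sInf ?_) (sInf_le_sInf ?_)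
    · rintro M ⟨hM, hMψ⟩
      exact ⟨hM, push_aux R hφ.1 hclose hL hM hMψ⟩
    · rintro M ⟨hM, hMφ⟩
      exact ⟨hM, push_aux R hψ.1 hclose' hL hM hMφ⟩
  · intro M hM
    refine le_antisymm (sInf_le_sInf ?_) (sInf_le_sInf ?_)
    · rintro L ⟨hL, hLψ⟩
      exact ⟨hL, pull_aux R hclose hM hL hLψ⟩
    · rintro L ⟨hL, hLφ⟩
      exact ⟨hL, pull_aux R hclose' hM hL hLφ⟩
end

section
/- Let φ: G → H be a coarse embedding and let L ⊆ C(G,W) be a res-invariant RG-submodule. Then φ^{*-1}L := {f ∈ C(H,W) : φ*(h.f) ∈ L for all h ∈ H} is a res-invariant RH-submodule of C(H,W), and it is the largest res-invariant RH-submodule M of C(H,W) such that φ*(f) ∈ L for all f ∈ M. -/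
/-!
Pulling back along `x ↦ h⁻¹ * φ x` is `R`-linear and commutes with restriction to a subset
(the indicator of `A` pulls back to the indicator of the preimage of `A`), so the
pre-inverse is a res-invariant submodule. The condition quantifies over all translates, so it is
translation-invariant, and any translation-invariant `M` with `φ^* M ⊆ L` lies inside it.
-/

section

variable {G H : Type*} [Group H] (R : Type*) [CommRing R] {W : Type*} [AddCommGroup W]
  [Module R W]

/-- The pre-inverse `φ^{*-1} L` of `L` along `φ`. -/
def preInvMod (φ : G → H) (L : Submodule R (G → W)) : Submodule R (H → W) where
  carrier := {f | ∀ h : H, (fun x : G => f (h⁻¹ * φ x)) ∈ L}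
  add_mem' hf hg h := L.add_mem (hf h) (hg h)
  zero_mem' _ := L.zero_mem
  smul_mem' c _ hf h := L.smul_mem c (hf h)

variable {R} {φ : G → H} {L : Submodule R (G → W)}

theorem translate_mem_preInvMod {f : H → W} (hf : f ∈ preInvMod R φ L) (g : H) :
    (fun y => f (g⁻¹ * y)) ∈ preInvMod R φ L := by
  intro h
  simpa [mul_assoc] using hf (h * g)

theorem indicator_mem_preInvMod (hL : ∀ f ∈ L, ∀ A : Set G, A.indicator f ∈ L)
    {f : H → W} (hf : f ∈ preInvMod R φ L) (A : Set H) :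
    A.indicator f ∈ preInvMod R φ L := by
  intro h
  convert hL _ (hf h) {x | h⁻¹ * φ x ∈ A} using 1
  ext x
  simp [Set.indicator]

theorem le_preInvMod {M : Submodule R (H → W)}
    (hM : ∀ g : H, ∀ f ∈ M, (fun y => f (g⁻¹ * y)) ∈ M)
    (hML : ∀ f ∈ M, (fun x : G => f (φ x)) ∈ L) : M ≤ preInvMod R φ L :=
  fun f hf h => hML _ (hM h f hf)

end

theorem preInvMod_resInvariant_and_largest_general {G H : Type*} [Group G] [Group H]
    (R : Type*) [CommRing R] {W : Type*} [AddCommGroup W] [Module R W]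
    (φ : G → H)
    (L : Submodule R (G → W)) (hL : IsResInvariant R L) :
    ∃ N : Submodule R (H → W),
      (N : Set (H → W)) = {f : H → W | ∀ h : H, (fun x : G => f (h⁻¹ * φ x)) ∈ L} ∧
      IsResInvariant R N ∧
      ∀ M : Submodule R (H → W), IsResInvariant R M →
        (∀ f ∈ M, (fun x : G => f (φ x)) ∈ L) → M ≤ N :=
  ⟨preInvMod R φ L, rfl,
    ⟨fun g _ hf => translate_mem_preInvMod hf g, fun _ hf => indicator_mem_preInvMod hL.2 hf⟩,
    fun _ hM hML => le_preInvMod hM.1 hML⟩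

theorem preInvMod_resInvariant_and_largest {G H : Type*} [Group G] [Group H]
    (R : Type*) [CommRing R] {W : Type*} [AddCommGroup W] [Module R W]
    (φ : G → H) (hφ : CoarseEmbedding φ)
    (L : Submodule R (G → W)) (hL : IsResInvariant R L) :
    ∃ N : Submodule R (H → W),
      (N : Set (H → W)) = {f : H → W | ∀ h : H, (fun x : G => f (h⁻¹ * φ x)) ∈ L} ∧
      IsResInvariant R N ∧
      ∀ M : Submodule R (H → W), IsResInvariant R M →
        (∀ f ∈ M, (fun x : G => f (φ x)) ∈ L) → M ≤ N :=
  preInvMod_resInvariant_and_largest_general R φ L hL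
end

section
/- Let φ: G → H be a coarse embedding and let X̃ ⊆ G be a subset on which φ is injective, with Ỹ = φ(X̃). Then for any res-invariant RH-submodule M of C(H,W), the map 1_Ỹ · M → 1_X̃ · (φ*M), f ↦ 1_X̃ · (f∘φ), is a bijection. -/
/-- Functions that agree with some `f ∘ φ`, `f ∈ M`, on every set where `φ` is injective. -/
def goodSet {G H : Type*} [Group G] [Group H] (R : Type*) [CommRing R]
    {W : Type*} [AddCommGroup W] [Module R W]
    (φ : G → H) (M : Submodule R (H → W)) : Submodule R (G → W) where
  carrier := {h | ∀ X : Set G, Set.InjOn φ X → ∃ f ∈ M, ∀ x ∈ X, h x = f (φ x)}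
  add_mem' := by
    rintro a b ha hb X hX
    obtain ⟨fa, hfa, ha'⟩ := ha X hX
    obtain ⟨fb, hfb, hb'⟩ := hb X hX
    exact ⟨fa + fb, M.add_mem hfa hfb, fun x hx => by simp [ha' x hx, hb' x hx]⟩
  zero_mem' := fun X hX => ⟨0, M.zero_mem, fun x hx => rfl⟩
  smul_mem' := by
    rintro c a ha X hX
    obtain ⟨fa, hfa, ha'⟩ := ha X hX
    exact ⟨c • fa, M.smul_mem c hfa, fun x hx => by simp [ha' x hx]⟩

theorem goodSet_resInv {G H : Type*} [Group G] [Group H] (R : Type*) [CommRing R]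
    {W : Type*} [AddCommGroup W] [Module R W]
    (φ : G → H) (hφ : CoarseEmbedding φ) (M : Submodule R (H → W))
    (hM : IsResInvariant R M) : IsResInvariant R (goodSet R φ M) := by
  constructor
  · intro g h hh X' hX'
    have hT : ((fun x => φ (g⁻¹ * x) * (φ x)⁻¹) '' X').Finite := by
      have h1 : ((fun p : G × G => p.1 * p.2⁻¹) '' ((fun x => (g⁻¹ * x, x)) '' X')).Finite := by
        apply Set.Finite.subset (Set.finite_singleton g⁻¹)
        rintro _ ⟨_, ⟨x, hx, rfl⟩, rfl⟩
        simp
      have h2 := (hφ _).1 h1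
      have heq : ((fun p : G × G => φ p.1 * (φ p.2)⁻¹) '' ((fun x => (g⁻¹ * x, x)) '' X'))
          = (fun x => φ (g⁻¹ * x) * (φ x)⁻¹) '' X' := by
        rw [← Set.image_comp]; rfl
      rwa [heq] at h2
    set Xk : H → Set G := fun k => {x ∈ X' | φ (g⁻¹ * x) = k * φ x} with hXkdef
    have hinjk : ∀ k, Set.InjOn φ ((fun x => g⁻¹ * x) '' Xk k) := by
      rintro k _ ⟨x₁, hx₁, rfl⟩ _ ⟨x₂, hx₂, rfl⟩ he
      have hφe : φ x₁ = φ x₂ := by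
        rw [hx₁.2, hx₂.2] at he; exact mul_left_cancel he
      rw [hX' hx₁.1 hx₂.1 hφe]
    choose F hF1 hF2 using fun k => hh _ (hinjk k)
    refine ⟨∑ k ∈ hT.toFinset, Set.indicator (φ '' Xk k) (fun y => F k (k * y)), ?_, ?_⟩
    · apply Submodule.sum_mem
      intro k _
      apply hM.2
      have h3 := hM.1 k⁻¹ (F k) (hF1 k)
      simpa using h3
    · intro x hx
      set k₀ := φ (g⁻¹ * x) * (φ x)⁻¹ with hk₀
      have hxk : x ∈ Xk k₀ := ⟨hx, by rw [hk₀]; group⟩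
      have hmem : k₀ ∈ hT.toFinset := by
        rw [Set.Finite.mem_toFinset]; exact ⟨x, hx, rfl⟩
      rw [Finset.sum_apply]
      rw [Finset.sum_eq_single_of_mem k₀ hmem ?side]
      case side =>
        intro k _ hne
        apply Set.indicator_of_notMem
        rintro ⟨x', hx', he⟩
        have hxx : x' = x := hX' hx'.1 hx he
        subst hxx
        have : k * φ x' = k₀ * φ x' := by rw [← hx'.2, ← hxk.2]
        exact hne (mul_right_cancel this)
      rw [Set.indicator_of_mem (show φ x ∈ φ '' Xk k₀ from ⟨x, hxk, rfl⟩)]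
      have h4 := hF2 k₀ (g⁻¹ * x) ⟨x, hxk, rfl⟩
      show h (g⁻¹ * x) = F k₀ (k₀ * φ x)
      rw [h4, hxk.2]
  · intro h hh A X' hX'
    obtain ⟨f, hf, hfx⟩ := hh X' hX'
    refine ⟨Set.indicator (φ '' (X' ∩ A)) f, hM.2 f hf _, ?_⟩
    intro x hx
    by_cases hxA : x ∈ A
    · rw [Set.indicator_of_mem hxA, Set.indicator_of_mem (show φ x ∈ φ '' (X' ∩ A) from ⟨x, ⟨hx, hxA⟩, rfl⟩), hfx x hx]
    · rw [Set.indicator_of_notMem hxA, Set.indicator_of_notMem]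
      rintro ⟨x', hx', he⟩
      exact hxA (hX' hx'.1 hx he ▸ hx'.2)

theorem restriction_bijection {G H : Type*} [Group G] [Group H]
    (R : Type*) [CommRing R] {W : Type*} [AddCommGroup W] [Module R W]
    (φ : G → H) (hφ : CoarseEmbedding φ)
    (X : Set G) (hinj : Set.InjOn φ X) (Y : Set H) (hY : Y = φ '' X)
    (M : Submodule R (H → W)) (hM : IsResInvariant R M) :
    Set.BijOn (fun f : H → W => X.indicator (f ∘ φ))
      (Set.indicator Y '' (M : Set (H → W)))
      (Set.indicator X '' ((pullMod R φ M : Submodule R (G → W)) : Set (G → W))) := by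
  have hle : pullMod R φ M ≤ goodSet R φ M := by
    apply sInf_le
    exact ⟨goodSet_resInv R φ hφ M hM, fun f hf => fun X' _ => ⟨f, hf, fun x _ => rfl⟩⟩
  refine ⟨?_, ?_, ?_⟩
  · -- MapsTo
    rintro _ ⟨f, hf, rfl⟩
    refine ⟨f ∘ φ, ?_, ?_⟩
    · simp only [pullMod, SetLike.mem_coe, Submodule.mem_sInf]
      rintro L ⟨_, hL⟩
      exact hL f hf
    · funext x
      by_cases hx : x ∈ X
      · have hφx : φ x ∈ Y := hY ▸ Set.mem_image_of_mem φ hx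
        simp [Set.indicator_of_mem hx, Set.indicator_of_mem hφx, Function.comp]
      · simp [Set.indicator_of_notMem hx]
  · -- InjOn
    rintro _ ⟨f₁, hf₁, rfl⟩ _ ⟨f₂, hf₂, rfl⟩ hEq
    funext y
    by_cases hy : y ∈ Y
    · obtain ⟨x, hxX, rfl⟩ : ∃ x ∈ X, φ x = y := by rwa [hY] at hy
      have h5 := congrFun hEq x
      simpa [Set.indicator_of_mem hxX, Function.comp] using h5
    · simp [Set.indicator_of_notMem hy]
  · -- SurjOn
    rintro _ ⟨h, hh, rfl⟩
    obtain ⟨f, hf, hfx⟩ := hle hh X hinj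
    refine ⟨Y.indicator f, ⟨f, hf, rfl⟩, ?_⟩
    funext x
    by_cases hx : x ∈ X
    · have hφx : φ x ∈ Y := hY ▸ Set.mem_image_of_mem φ hx
      simp [Set.indicator_of_mem hx, Set.indicator_of_mem hφx, hfx x hx, Function.comp]
    · simp [Set.indicator_of_notMem hx]
end

section
/- Let φ: G → H be a map with finite point preimages such that for all x, x̃ ∈ G with φ(x̃) = φ(x) one has x̃·x⁻¹ ∈ F for a fixed finite F ⊆ G. Then for any res-invariant RG-submodule L of C(G,W) and f ∈ L, the function φ*(φ_*(f)) = (φ_*(f))∘φ lies in L; explicitly, writing F_x = {g ∈ F : φ(gx) = φ(x)} and X_i = {x : F_x = F_i} for subsets F_i ⊆ F, one has φ*(φ_*(f)) = Σ_{F_i ⊆ F} 1_{X_i} · (Σ_{g ∈ F_i} g⁻¹.f). -/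
theorem pull_push_mem_and_formula {G H : Type*} [Group G] [Group H] [DecidableEq G] [DecidableEq H]
    (R : Type*) [CommRing R] {W : Type*} [AddCommGroup W] [Module R W]
    (φ : G → H) (hpre : ∀ y : H, (φ ⁻¹' {y}).Finite)
    (F : Finset G) (hF : ∀ x x' : G, φ x' = φ x → x' * x⁻¹ ∈ F)
    (L : Submodule R (G → W)) (hL : IsResInvariant R L) (f : G → W) (hf : f ∈ L) :
    ((pushFn φ f) ∘ φ) ∈ L ∧
    (pushFn φ f) ∘ φ =
      ∑ Fi ∈ F.powerset,
        Set.indicator {x : G | F.filter (fun g => φ (g * x) = φ x) = Fi}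
          (fun x => ∑ g ∈ Fi, f (g * x)) := by
  have key : ∀ x : G, pushFn φ f (φ x) =
      ∑ g ∈ F.filter (fun g => φ (g * x) = φ x), f (g * x) := by
    intro x
    have hset : {x' : G | φ x' = φ x} =
        ↑((F.filter (fun g => φ (g * x) = φ x)).image (fun g => g * x)) := by
      ext x'
      simp only [Set.mem_setOf_eq, Finset.coe_image, Set.mem_image, Finset.mem_coe,
        Finset.mem_filter]
      constructor
      · intro h
        exact ⟨x' * x⁻¹, ⟨hF x x' h, by simpa using h⟩, by group⟩
      · rintro ⟨g, ⟨_, hg⟩, rfl⟩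
        exact hg
    rw [pushFn, hset, finsum_mem_coe_finset, Finset.sum_image]
    intro a _ b _ h
    exact mul_right_cancel h
  have hformula : (pushFn φ f) ∘ φ =
      ∑ Fi ∈ F.powerset,
        Set.indicator {x : G | F.filter (fun g => φ (g * x) = φ x) = Fi}
          (fun x => ∑ g ∈ Fi, f (g * x)) := by
    funext x
    have hx : F.filter (fun g => φ (g * x) = φ x) ∈ F.powerset :=
      Finset.mem_powerset.mpr (Finset.filter_subset _ _)
    simp only [Function.comp_apply, key x, Finset.sum_apply, Set.indicator_apply,
      Set.mem_setOf_eq]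
    rw [Finset.sum_ite_eq F.powerset (F.filter (fun g => φ (g * x) = φ x))
      (fun Fi => ∑ g ∈ Fi, f (g * x))]
    simp [hx]
  refine ⟨?_, hformula⟩
  rw [hformula]
  refine Submodule.sum_mem L fun Fi _ => ?_
  refine hL.2 _ ?_ _
  have : (fun x => ∑ g ∈ Fi, f (g * x)) = ∑ g ∈ Fi, (fun x => f (g * x)) := by
    funext x; simp
  rw [this]
  refine Submodule.sum_mem L fun g _ => ?_
  have := hL.1 g⁻¹ f hf
  simpa using this
end

section
/- Let G be a countable group, H a group, and suppose Y ⊆ H is a subset such that H = ⋃_{h∈H} hY. Enumerating H = {h₁, h₂, ...} with h₁ = e and defining recursively Y₁ = Y and Y_j = Y \ h_j⁻¹(h₁Y₁ ∪ ... ∪ h_{j-1}Y_{j-1}), the sets h_jY_j are pairwise disjoint, H = ⊔_{j≥1} h_jY_j, and for every h ∈ H the intersection hY ∩ h_jY_j is empty for all but finitely many j. -/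
theorem exhaustion_decomposition {H : Type*} [Group H] [Countable H]
    (Y : Set H) (hcover : (⋃ h : H, (fun y => h * y) '' Y) = Set.univ)
    (e : ℕ → H) (hsurj : Function.Surjective e) (he0 : e 0 = 1)
    (Ys : ℕ → Set H)
    (hY0 : Ys 0 = Y)
    (hrec : ∀ j : ℕ, Ys j =
      Y \ (fun y => (e j)⁻¹ * y) '' (⋃ i ∈ Finset.range j, (fun y => e i * y) '' Ys i)) :
    (∀ i j : ℕ, i ≠ j →
        Disjoint ((fun y => e i * y) '' Ys i) ((fun y => e j * y) '' Ys j)) ∧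
    (⋃ j : ℕ, (fun y => e j * y) '' Ys j) = Set.univ ∧
    ∀ h : H, {j : ℕ | ((fun y => h * y) '' Y ∩ (fun y => e j * y) '' Ys j).Nonempty}.Finite := by
  set S : ℕ → Set H := fun j => (fun y => e j * y) '' Ys j with hS
  -- key: an element of S j is not in S i for i < j
  have key : ∀ i j : ℕ, i < j → ∀ x, x ∈ S j → x ∉ S i := by
    intro i j hij x hxj hxi
    obtain ⟨y, hy, rfl⟩ := hxj
    rw [hrec j] at hy
    refine hy.2 ⟨e j * y, ?_, by group⟩
    exact Set.mem_biUnion (Finset.mem_range.mpr hij) hxi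
  have hdisj : ∀ i j : ℕ, i ≠ j → Disjoint (S i) (S j) := by
    intro i j hij
    rw [Set.disjoint_left]
    intro x hxi hxj
    rcases lt_or_gt_of_ne hij with h | h
    · exact key i j h x hxj hxi
    · exact key j i h x hxi hxj
  -- e k • Y is covered by S 0, ..., S k
  have hcov : ∀ k : ℕ, (fun y => e k * y) '' Y ⊆ ⋃ i ∈ Finset.range (k + 1), S i := by
    intro k x hx
    obtain ⟨y, hy, rfl⟩ := hx
    by_cases hU : e k * y ∈ ⋃ i ∈ Finset.range k, S i
    · obtain ⟨i, hi, hxi⟩ := Set.mem_iUnion₂.mp hU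
      exact Set.mem_biUnion (Finset.mem_range.mpr (Nat.lt_succ_of_lt (Finset.mem_range.mp hi))) hxi
    · refine Set.mem_biUnion (Finset.self_mem_range_succ k) ⟨y, ?_, rfl⟩
      rw [hrec k]
      refine ⟨hy, fun hc => hU ?_⟩
      obtain ⟨z, hz, hez⟩ := hc
      have : z = e k * y := by
        have : (e k)⁻¹ * z = y := hez
        rw [← this]; group
      rwa [this] at hz
  refine ⟨hdisj, ?_, ?_⟩
  · apply Set.eq_univ_of_univ_subset
    rw [← hcover]
    refine Set.iUnion_subset fun h => ?_
    obtain ⟨k, rfl⟩ := hsurj h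
    exact (hcov k).trans (Set.iUnion₂_subset fun i _ => Set.subset_iUnion S i)
  · intro h
    obtain ⟨k, rfl⟩ := hsurj h
    apply Set.Finite.subset (Set.finite_Iic k)
    intro j hj
    simp only [Set.mem_setOf_eq] at hj
    obtain ⟨x, hx, hxj⟩ := hj
    by_contra hjk
    have hkj : k < j := lt_of_not_ge (fun hle => hjk (Set.mem_Iic.mpr hle))
    obtain ⟨i, hi, hxi⟩ := Set.mem_iUnion₂.mp (hcov k hx)
    exact key i j (lt_of_lt_of_le (Finset.mem_range.mp hi) hkj) x hxj hxi
end

section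
/- Let φ: G → H be a coarse embedding, X ⊆ G a subset on which φ is injective with φ(X) = φ(G) =: Y, and ω: H → G defined by ω(y) = (φ|_X)⁻¹(h_j⁻¹ y) for y ∈ h_jY_j, where H = ⊔_j h_jY_j is the disjoint decomposition obtained from the enumeration H = {h₁ = e, h₂, ...} with Y₁ = Y and Y_j = Y \ h_j⁻¹(h₁Y₁ ∪ ... ∪ h_{j-1}Y_{j-1}). Then ω∘φ is close to id_G, i.e., the set {ω(φ(x))·x⁻¹ : x ∈ G} is finite. -/
theorem omega_comp_phi_close_id {G H : Type*} [Group G] [Group H] [Countable H]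
    (φ : G → H) (hφ : CoarseEmbedding φ)
    (X : Set G) (hinj : Set.InjOn φ X) (hX : φ '' X = Set.range φ)
    (e : ℕ → H) (hsurj : Function.Surjective e) (he0 : e 0 = 1)
    (Ys : ℕ → Set H)
    (hrec : ∀ j : ℕ, Ys j =
      Set.range φ \
        (fun y => (e j)⁻¹ * y) '' (⋃ i ∈ Finset.range j, (fun y => e i * y) '' Ys i))
    (ω : H → G)
    (hω : ∀ j : ℕ, ∀ y ∈ (fun z => e j * z) '' Ys j, ω y ∈ X ∧ φ (ω y) = (e j)⁻¹ * y) :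
    (Set.range fun x : G => ω (φ x) * x⁻¹).Finite := by
  have hY0 : Ys 0 = Set.range φ := by
    rw [hrec 0]; simp
  have key : ∀ x : G, φ (ω (φ x)) = φ x := by
    intro x
    have hmem : φ x ∈ (fun z => e 0 * z) '' Ys 0 := by
      refine ⟨φ x, ?_, by simp [he0]⟩
      rw [hY0]; exact ⟨x, rfl⟩
    simpa [he0] using (hω 0 (φ x) hmem).2
  have h1 : ((fun p : G × G => φ p.1 * (φ p.2)⁻¹) ''
      Set.range (fun x => (ω (φ x), x))).Finite := by
    apply Set.Finite.subset (Set.finite_singleton 1)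
    rintro y ⟨p, ⟨x, rfl⟩, rfl⟩
    simp [key x]
  have h2 := (hφ _).2 h1
  have heq : (Set.range fun x : G => ω (φ x) * x⁻¹) =
      (fun p : G × G => p.1 * p.2⁻¹) '' Set.range (fun x => (ω (φ x), x)) := by
    ext g
    constructor
    · rintro ⟨x, rfl⟩; exact ⟨(ω (φ x), x), ⟨x, rfl⟩, rfl⟩
    · rintro ⟨p, ⟨x, rfl⟩, rfl⟩; exact ⟨x, rfl⟩
  rw [heq]; exact h2
end
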